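/- Snort played on the path graph P_6 with all vertices uncolored is a first-player win: the player to move (whether Left or Right) has a winning strategy under normal play. -/
import Mathlib


/-- A Snort position: a simple graph together with a partial colouring of its
vertices. `some true` means blue (Left's colour), `some false` means red
(Right's colour), `none` means uncolored. -/
structure SnortPos (V : Type) where
  graph : SimpleGraph V
  color : V → Option Bool

/-- Left's legal moves: colour blue an uncolored vertex having no red neighbour. -/
def SnortLeftMove {V : Type} (p q : SnortPos V) : Prop :=
  q.graph = p.graph ∧ ∃ v, p.color v = none ∧
    (∀ w, p.graph.Adj v w → p.color w ≠ some false) ∧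
    q.color v = some true ∧ ∀ w, w ≠ v → q.color w = p.color w

/-- Right's legal moves: colour red an uncolored vertex having no blue neighbour. -/
def SnortRightMove {V : Type} (p q : SnortPos V) : Prop :=
  q.graph = p.graph ∧ ∃ v, p.color v = none ∧
    (∀ w, p.graph.Adj v w → p.color w ≠ some true) ∧
    q.color v = some false ∧ ∀ w, w ≠ v → q.color w = p.color w

mutual
  /-- Left, moving first, has a winning strategy (normal play). -/
  inductive LeftWinsFirst {V : Type} : SnortPos V → Prop
    | intro (p q : SnortPos V) (h : SnortLeftMove p q) (hq : LeftWinsSecond q) :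
        LeftWinsFirst p
  /-- Left, moving second, has a winning strategy (normal play). -/
  inductive LeftWinsSecond {V : Type} : SnortPos V → Prop
    | intro (p : SnortPos V) (h : ∀ q, SnortRightMove p q → LeftWinsFirst q) :
        LeftWinsSecond p
end

mutual
  /-- Right, moving first, has a winning strategy (normal play). -/
  inductive RightWinsFirst {V : Type} : SnortPos V → Prop
    | intro (p q : SnortPos V) (h : SnortRightMove p q) (hq : RightWinsSecond q) :
        RightWinsFirst p
  /-- Right, moving second, has a winning strategy (normal play). -/
  inductive RightWinsSecond {V : Type} : SnortPos V → Prop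
    | intro (p : SnortPos V) (h : ∀ q, SnortLeftMove p q → RightWinsFirst q) :
        RightWinsSecond p
end

/-- The position is a first-player win (outcome class 𝒩): whichever player
moves first has a winning strategy. -/
def FirstPlayerWins {V : Type} (p : SnortPos V) : Prop :=
  LeftWinsFirst p ∧ RightWinsFirst p

open SimpleGraph

instance : DecidableRel (pathGraph 6).Adj :=
  fun _ _ => decidable_of_iff _ pathGraph_adj.symm

abbrev Pos6 := Fin 6 → Option Bool

def canL (c : Pos6) (v : Fin 6) : Bool :=
  decide (c v = none) &&
    decide (∀ w, (pathGraph 6).Adj v w → c w ≠ some false)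

def canR (c : Pos6) (v : Fin 6) : Bool :=
  decide (c v = none) &&
    decide (∀ w, (pathGraph 6).Adj v w → c w ≠ some true)

def winS (canOpp : Pos6 → Fin 6 → Bool) (b : Bool) (f : Pos6 → Bool) (c : Pos6) : Bool :=
  (List.finRange 6).all fun w => !canOpp c w || f (Function.update c w (some b))

def lwinF : Nat → Pos6 → Bool
  | 0, _ => false
  | n+1, c => (List.finRange 6).any fun v =>
      canL c v && winS canR false (lwinF n) (Function.update c v (some true))

def rwinF : Nat → Pos6 → Bool
  | 0, _ => false
  | n+1, c => (List.finRange 6).any fun v =>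
      canR c v && winS canL true (rwinF n) (Function.update c v (some false))

lemma canL_move (c : Pos6) (v : Fin 6) (h : canL c v = true) :
    SnortLeftMove ⟨pathGraph 6, c⟩ ⟨pathGraph 6, Function.update c v (some true)⟩ := by
  simp only [canL, Bool.and_eq_true, decide_eq_true_eq] at h
  exact ⟨rfl, v, h.1, h.2, Function.update_self v _ c,
    fun w hw => Function.update_of_ne hw _ c⟩

lemma canR_move (c : Pos6) (v : Fin 6) (h : canR c v = true) :
    SnortRightMove ⟨pathGraph 6, c⟩ ⟨pathGraph 6, Function.update c v (some false)⟩ := by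
  simp only [canR, Bool.and_eq_true, decide_eq_true_eq] at h
  exact ⟨rfl, v, h.1, h.2, Function.update_self v _ c,
    fun w hw => Function.update_of_ne hw _ c⟩

lemma right_inv (c : Pos6) (q : SnortPos (Fin 6))
    (h : SnortRightMove ⟨pathGraph 6, c⟩ q) :
    ∃ v, canR c v = true ∧ q = ⟨pathGraph 6, Function.update c v (some false)⟩ := by
  obtain ⟨hg, v, h1, h2, h3, h4⟩ := h
  refine ⟨v, by simp only [canR, Bool.and_eq_true, decide_eq_true_eq]; exact ⟨h1, h2⟩, ?_⟩
  cases q with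
  | mk g col =>
    simp only [SnortPos.mk.injEq]
    refine ⟨hg, funext fun w => ?_⟩
    by_cases hw : w = v
    · subst hw; simpa [Function.update_self] using h3
    · simp only [Function.update_of_ne hw]; exact h4 w hw

lemma left_inv (c : Pos6) (q : SnortPos (Fin 6))
    (h : SnortLeftMove ⟨pathGraph 6, c⟩ q) :
    ∃ v, canL c v = true ∧ q = ⟨pathGraph 6, Function.update c v (some true)⟩ := by
  obtain ⟨hg, v, h1, h2, h3, h4⟩ := h
  refine ⟨v, by simp only [canL, Bool.and_eq_true, decide_eq_true_eq]; exact ⟨h1, h2⟩, ?_⟩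
  cases q with
  | mk g col =>
    simp only [SnortPos.mk.injEq]
    refine ⟨hg, funext fun w => ?_⟩
    by_cases hw : w = v
    · subst hw; simpa [Function.update_self] using h3
    · simp only [Function.update_of_ne hw]; exact h4 w hw

lemma lwinF_sound : ∀ n (c : Pos6), lwinF n c = true →
    LeftWinsFirst (⟨pathGraph 6, c⟩ : SnortPos (Fin 6)) := by
  intro n
  induction n with
  | zero => intro c h; simp [lwinF] at h
  | succ n ih =>
    intro c h
    simp only [lwinF, List.any_eq_true, Bool.and_eq_true] at h
    obtain ⟨v, -, hv, hS⟩ := h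
    refine LeftWinsFirst.intro _ _ (canL_move c v hv) ?_
    refine LeftWinsSecond.intro _ fun q hq => ?_
    obtain ⟨w, hw, rfl⟩ := right_inv _ q hq
    simp only [winS, List.all_eq_true, Bool.or_eq_true, Bool.not_eq_true'] at hS
    rcases hS w (List.mem_finRange w) with h' | h'
    · rw [hw] at h'; simp at h'
    · exact ih _ h'

lemma rwinF_sound : ∀ n (c : Pos6), rwinF n c = true →
    RightWinsFirst (⟨pathGraph 6, c⟩ : SnortPos (Fin 6)) := by
  intro n
  induction n with
  | zero => intro c h; simp [rwinF] at h
  | succ n ih =>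
    intro c h
    simp only [rwinF, List.any_eq_true, Bool.and_eq_true] at h
    obtain ⟨v, -, hv, hS⟩ := h
    refine RightWinsFirst.intro _ _ (canR_move c v hv) ?_
    refine RightWinsSecond.intro _ fun q hq => ?_
    obtain ⟨w, hw, rfl⟩ := left_inv _ q hq
    simp only [winS, List.all_eq_true, Bool.or_eq_true, Bool.not_eq_true'] at hS
    rcases hS w (List.mem_finRange w) with h' | h'
    · rw [hw] at h'; simp at h'
    · exact ih _ h'

/-- Snort played on the path graph `P₆` with all vertices uncolored is a
first-player win: the player to move, whether Left or Right, has a winning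
strategy under normal play. -/


theorem snort_P6_first_player_wins :
    FirstPlayerWins ⟨SimpleGraph.pathGraph 6, fun _ => none⟩ := by
  constructor
  · exact lwinF_sound 6 _ (by decide)
  · exact rwinF_sound 6 _ (by decide)
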